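/- arXiv:2009.04259 — 7 statements merged into one kernel-verified Lean document; each statement's English description precedes it below -/
import Mathlib

section
/- For all natural numbers k, n, m with ⌈log n⌉^(k+1) ≤ n and m < ⌈log n⌉^(k+1), there is no m-local function f : (Fin n → Bool) → Bool such that for every binary string w of length n, f(w) = true if and only if w ∈ INIT_{k+1}. (Combinatorial core of the lower bound in Theorem 1: INIT_{k+1} is not decidable by a deterministic random-access machine reading at most m input bits.) -/
/-- `w ∈ INIT_k`: `⌈log n⌉^k ≤ n` and the first `⌈log n⌉^k` bits of `w` are `0`. -/
def InitMem (k n : ℕ) (w : Fin n → Bool) : Prop :=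
  (Nat.clog 2 n) ^ k ≤ n ∧ ∀ i : Fin n, (i : ℕ) < (Nat.clog 2 n) ^ k → w i = false

/-- `f` is `m`-local: its value on any input is determined by at most `m` bits. -/
def IsLocal (n m : ℕ) (f : (Fin n → Bool) → Bool) : Prop :=
  ∀ w : Fin n → Bool, ∃ S : Finset (Fin n), S.card ≤ m ∧
    ∀ v : Fin n → Bool, (∀ i ∈ S, v i = w i) → f v = f w

/-! An `m`-local function cannot inspect every bit of a set of more than `m` positions, so the
all-zero string and a string with a single `1` among the first `⌈log n⌉^(k+1)` positions get the
same answer, although exactly one of them lies in `INIT_{k+1}`. -/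

open Finset

theorem IsLocal.exists_forall_update_eq {n m : ℕ} {f : (Fin n → Bool) → Bool}
    (hf : IsLocal n m f) (w : Fin n → Bool) {T : Finset (Fin n)} (hT : m < #T) :
    ∃ j ∈ T, ∀ b, f (Function.update w j b) = f w := by
  obtain ⟨S, hS, hSf⟩ := hf w
  obtain ⟨j, hjT, hjS⟩ : ∃ j ∈ T, j ∉ S := exists_mem_notMem_of_card_lt_card (by omega)
  exact ⟨j, hjT, fun b => hSf _ fun i hi => Function.update_of_ne (ne_of_mem_of_not_mem hi hjS) _ _⟩

theorem init_lower_bound (k n m : ℕ)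
    (hkn : (Nat.clog 2 n) ^ (k + 1) ≤ n)
    (hm : m < (Nat.clog 2 n) ^ (k + 1)) :
    ¬ ∃ f : (Fin n → Bool) → Bool, IsLocal n m f ∧
        ∀ w : Fin n → Bool, (f w = true ↔ InitMem (k + 1) n w) := by
  rintro ⟨f, hloc, hspec⟩
  have hzero : f (fun _ => false) = true := (hspec _).2 ⟨hkn, fun _ _ => rfl⟩
  have hprefix : m < #{i : Fin n | (i : ℕ) < Nat.clog 2 n ^ (k + 1)} := by
    rwa [Fin.card_filter_val_lt, min_eq_right hkn]
  obtain ⟨j, hj, hflip⟩ := hloc.exists_forall_update_eq (fun _ => false) hprefix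
  have hj_false := ((hspec _).1 ((hflip true).trans hzero)).2 j (mem_filter.1 hj).2
  simp at hj_false
end

section
/- For all natural numbers k, n, m with ⌈log n⌉^(k+1) ≤ n and m < ⌈log n⌉^(k+1), there is no predicate A : (Fin n → Bool) → Prop having acceptance certificates of size m such that for every binary string w of length n, A(w) holds if and only if w ∈ CONSEQ_{k+1}. (Combinatorial core of the lower bound in Theorem 2: CONSEQ_{k+1} is not decidable by a nondeterministic random-access machine whose accepting computations read at most m input bits.) -/
/-- `w` has a run of zeros of length `L` at position `i`. -/
def hasRunAt (n : ℕ) (w : Fin n → Bool) (i L : ℕ) : Prop :=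
  i + L ≤ n ∧ ∀ j : Fin n, i ≤ (j : ℕ) → (j : ℕ) < i + L → w j = false

/-- `w` has a run of zeros of length `L` (at some position). -/
def hasRun (n : ℕ) (w : Fin n → Bool) (L : ℕ) : Prop :=
  ∃ i : ℕ, hasRunAt n w i L

/-- `w ∈ CONSEQ_k`: `w` has a run of zeros of length `⌈log n⌉^k`. -/
def ConseqMem (k n : ℕ) (w : Fin n → Bool) : Prop :=
  hasRun n w ((Nat.clog 2 n) ^ k)

/-- `A` has acceptance certificates of size `m`. -/
def HasAccCert (n m : ℕ) (A : (Fin n → Bool) → Prop) : Prop :=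
  ∀ w : Fin n → Bool, A w → ∃ S : Finset (Fin n), S.card ≤ m ∧
    ∀ v : Fin n → Bool, (∀ i ∈ S, v i = w i) → A v

/-!
The all-zero string lies in `CONSEQ_{k+1}`, so it has a certificate `S` of at most `m` positions.
The string that is zero exactly on `S` agrees with it on `S` and is therefore accepted too, so it
has a run of `⌈log n⌉^(k+1)` zeros; all of them lie in `S`, whence `⌈log n⌉^(k+1) ≤ |S| ≤ m`.
-/

theorem hasRun_const_false {n L : ℕ} (h : L ≤ n) : hasRun n (fun _ => false) L :=
  ⟨0, by omega, fun _ _ _ => rfl⟩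

theorem hasRunAt.le_card_zeros {n i L : ℕ} {w : Fin n → Bool} (h : hasRunAt n w i L) :
    L ≤ ({j | w j = false} : Finset (Fin n)).card := by
  obtain ⟨hfit, hzero⟩ := h
  have hsub : Finset.Ico i (i + L) ⊆ ({j | w j = false} : Finset (Fin n)).image Fin.val := by
    intro x hx
    rw [Finset.mem_Ico] at hx
    exact Finset.mem_image.2 ⟨⟨x, by omega⟩, by simpa using hzero ⟨x, by omega⟩ hx.1 hx.2, rfl⟩
  calc L = (Finset.Ico i (i + L)).card := by simp
    _ ≤ _ := Finset.card_le_card hsub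
    _ ≤ _ := Finset.card_image_le

theorem hasRun.le_card_zeros {n L : ℕ} {w : Fin n → Bool} (h : hasRun n w L) :
    L ≤ ({j | w j = false} : Finset (Fin n)).card :=
  h.elim fun _ hi => hi.le_card_zeros

theorem conseq_lower_bound (k n m : ℕ)
    (hkn : (Nat.clog 2 n) ^ (k + 1) ≤ n)
    (hm : m < (Nat.clog 2 n) ^ (k + 1)) :
    ¬ ∃ A : (Fin n → Bool) → Prop, HasAccCert n m A ∧
        ∀ w : Fin n → Bool, (A w ↔ ConseqMem (k + 1) n w) := by
  rintro ⟨A, hcert, hA⟩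
  obtain ⟨S, hS, hSacc⟩ := hcert _ ((hA _).2 (hasRun_const_false hkn))
  have hrun : ConseqMem (k + 1) n (fun i => decide (i ∉ S)) :=
    (hA _).1 (hSacc _ fun i hi => by simp [hi])
  have hzeros : ({j | decide (j ∉ S) = false} : Finset (Fin n)) = S := by ext; simp
  have hcard := hrun.le_card_zeros
  rw [hzeros] at hcard
  omega
end

section
/- For all natural numbers k, n, m with 2·⌈log n⌉^(k+1) + 1 ≤ n and m < ⌈log n⌉^(k+1), there is no predicate A : (Fin n → Bool) → Prop having rejection certificates of size m such that for every binary string w of length n, A(w) holds if and only if w ∈ EXACTLYONCE_{k+1}. (Combinatorial core of the lower bound in Theorem 4: EXACTLYONCE_{k+1} is not decidable by an alternating random-access machine whose rejecting computations read at most m input bits.) -/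
/-- `w ∈ EXACTLYONCE_k`: exactly one position carries a run of zeros of length `⌈log n⌉^k`. -/
def ExactlyOnceMem (k n : ℕ) (w : Fin n → Bool) : Prop :=
  ∃! i : ℕ, hasRunAt n w i ((Nat.clog 2 n) ^ k)

/-- `A` has rejection certificates of size `m`. -/
def HasRejCert (n m : ℕ) (A : (Fin n → Bool) → Prop) : Prop :=
  ∀ w : Fin n → Bool, ¬ A w → ∃ S : Finset (Fin n), S.card ≤ m ∧
    ∀ v : Fin n → Bool, (∀ i ∈ S, v i = w i) → ¬ A v

/-!
The string `0^L 1 0^L 1⋯1` (with `L = ⌈log n⌉^(k+1)`) has two runs of zeros of length `L`, so it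
is rejected. A rejection certificate reads fewer than `L` bits, so it misses some bit `p` of the
second run; setting that bit to `1` leaves a string with the single run at `0`, which is accepted
although it agrees with the rejected string on the certificate.
-/

def onesAt (n : ℕ) (P : ℕ → Prop) [DecidablePred P] : Fin n → Bool :=
  fun j => decide (P j)

theorem hasRunAt_onesAt_iff {n : ℕ} {P : ℕ → Prop} [DecidablePred P] {i L : ℕ} :
    hasRunAt n (onesAt n P) i L ↔ i + L ≤ n ∧ ∀ j, i ≤ j → j < i + L → ¬ P j := by
  refine and_congr_right fun hiL => ⟨fun h j hij hjL => ?_, fun h j hij hjL => ?_⟩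
  · simpa [onesAt] using h ⟨j, by omega⟩ hij hjL
  · simpa [onesAt] using h j hij hjL

theorem not_hasRejCert_of_sensitive {n m : ℕ} {A : (Fin n → Bool) → Prop}
    {w : Fin n → Bool} (hw : ¬ A w) {T : Finset (Fin n)} (hT : m < T.card)
    (hsens : ∀ p ∈ T, ∃ v, (∀ i, i ≠ p → v i = w i) ∧ A v) : ¬ HasRejCert n m A := by
  intro hA
  obtain ⟨S, hS, hrej⟩ := hA w hw
  obtain ⟨p, hpT, hpS⟩ : ∃ p ∈ T, p ∉ S :=
    Finset.exists_mem_notMem_of_card_lt_card (hS.trans_lt hT)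
  obtain ⟨v, hvw, hv⟩ := hsens p hpT
  exact hrej v (fun i hi => hvw i (ne_of_mem_of_not_mem hi hpS)) hv

theorem not_existsUnique_hasRunAt_of_two_runs {n L : ℕ} (hn : 2 * L + 1 ≤ n) :
    ¬ ∃! i, hasRunAt n (onesAt n fun j => j = L ∨ 2 * L + 1 ≤ j) i L := by
  rintro ⟨i, -, huniq⟩
  have h₀ := huniq 0 (hasRunAt_onesAt_iff.2 ⟨by omega, fun j _ _ => by omega⟩)
  have h₁ := huniq (L + 1) (hasRunAt_onesAt_iff.2 ⟨by omega, fun j _ _ => by omega⟩)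
  omega

theorem existsUnique_hasRunAt_of_second_run_broken {n L p : ℕ} (hn : 2 * L + 1 ≤ n)
    (hp : L < p) (hp' : p ≤ 2 * L) :
    ∃! i, hasRunAt n (onesAt n fun j => j = L ∨ j = p ∨ 2 * L + 1 ≤ j) i L := by
  refine ⟨0, hasRunAt_onesAt_iff.2 ⟨by omega, fun j _ _ => by omega⟩, fun i hi => ?_⟩
  obtain ⟨hiL, hzero⟩ := hasRunAt_onesAt_iff.1 hi
  -- a run starting at `i ≥ 1` would cover the `1` at position `L`, at `p`, or at `i + L - 1`
  have hL := hzero L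
  have hP := hzero p
  have hlast := hzero (i + L - 1)
  omega

theorem exactlyonce_lower_bound (k n m : ℕ)
    (hkn : 2 * (Nat.clog 2 n) ^ (k + 1) + 1 ≤ n)
    (hm : m < (Nat.clog 2 n) ^ (k + 1)) :
    ¬ ∃ A : (Fin n → Bool) → Prop, HasRejCert n m A ∧
        ∀ w : Fin n → Bool, (A w ↔ ExactlyOnceMem (k + 1) n w) := by
  rintro ⟨A, hcert, hA⟩
  set L := Nat.clog 2 n ^ (k + 1)
  let secondRun : Finset (Fin n) := Finset.Ioc ⟨L, by omega⟩ ⟨2 * L, by omega⟩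
  refine not_hasRejCert_of_sensitive (T := secondRun)
    ((hA _).not.2 (not_existsUnique_hasRunAt_of_two_runs hkn)) ?_ (fun p hp => ?_) hcert
  · simpa [secondRun, two_mul] using hm
  · rw [Finset.mem_Ioc, Fin.lt_def, Fin.le_def] at hp
    refine ⟨onesAt n fun j => j = L ∨ j = p ∨ 2 * L + 1 ≤ j, fun i hi => ?_,
      (hA _).2 (existsUnique_hasRunAt_of_second_run_broken hkn hp.1 hp.2)⟩
    simp [onesAt, L, Fin.val_ne_of_ne hi]
end

section
/- For all natural numbers k, l, n, m with 2·⌈log n⌉^((k+1)·(l+1)) + 1 ≤ n and m < ⌈log n⌉^((k+1)·(l+1)), there is no predicate A : (Fin n → Bool) → Prop having rejection certificates of size m such that for every binary string w of length n, A(w) holds if and only if w ∈ GENEXACTLY_{k+1,l}. (Combinatorial core of the lower bound (b) in Theorem 5.) -/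
/-- `w ∈ GENEXACTLY_{k,l}`: exactly one position carries a run of zeros of length `⌈log n⌉^(k·(l+1))`. -/
def GenExactlyMem (k l n : ℕ) (w : Fin n → Bool) : Prop :=
  ∃! i : ℕ, hasRunAt n w i ((Nat.clog 2 n) ^ (k * (l + 1)))

def zeroesOn (n : ℕ) (Z : Finset ℕ) : Fin n → Bool := fun j => decide ((j : ℕ) ∉ Z)

theorem hasRunAt_zeroesOn_iff {n i L : ℕ} {Z : Finset ℕ} :
    hasRunAt n (zeroesOn n Z) i L ↔ i + L ≤ n ∧ Finset.Ico i (i + L) ⊆ Z := by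
  simp only [hasRunAt, zeroesOn, decide_eq_false_iff_not, not_not]
  refine and_congr_right fun hn => ⟨fun h j hj => ?_, fun h j hij hjL => h (by simp [hij, hjL])⟩
  rw [Finset.mem_Ico] at hj
  exact h ⟨j, by omega⟩ hj.1 hj.2

theorem not_existsUnique_hasRunAt_const_false {n L : ℕ} (h : L + 1 ≤ n) :
    ¬ ∃! i, hasRunAt n (fun _ => false) i L := by
  rintro ⟨i, -, huniq⟩
  have h0 := huniq 0 ⟨by omega, fun _ _ _ => rfl⟩
  have h1 := huniq 1 ⟨by omega, fun _ _ _ => rfl⟩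
  omega

/-- Each `s ∈ S` rules out at most one `a ≤ L`: `s + 1` if `s < L`, and `s - L` otherwise. -/
theorem exists_window_free_ends (S : Finset ℕ) {L : ℕ} (hS : S.card ≤ L) :
    ∃ a ≤ L, (0 < a → a - 1 ∉ S) ∧ a + L ∉ S := by
  set bad := S.image fun s => if s < L then s + 1 else s - L
  obtain ⟨a, haL, ha⟩ : ∃ a ∈ Finset.range (L + 1), a ∉ bad := by
    by_contra! h
    have := (Finset.card_le_card h).trans Finset.card_image_le
    simp only [Finset.card_range] at this
    omega
  rw [Finset.mem_range] at haL
  refine ⟨a, by omega, fun ha0 hs => ha ?_, fun hs => ha ?_⟩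
  · exact Finset.mem_image.2 ⟨a - 1, hs, by rw [if_pos (by omega)]; omega⟩
  · exact Finset.mem_image.2 ⟨a + L, hs, by rw [if_neg (by omega)]; omega⟩

/-- A window of length `L` inside `[a, a + L) ∪ S` either misses `[a, a + L)`, and then fits
in `S`, or meets it off-centre, and then contains `a - 1` or `a + L`. -/
theorem eq_of_Ico_subset_Ico_union {S : Finset ℕ} {a i L : ℕ} (hS : S.card < L)
    (hleft : 0 < a → a - 1 ∉ S) (hright : a + L ∉ S)
    (h : Finset.Ico i (i + L) ⊆ Finset.Ico a (a + L) ∪ S) : i = a := by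
  have mem : ∀ j, i ≤ j → j < i + L → (a ≤ j ∧ j < a + L) ∨ j ∈ S :=
    fun j hij hjL => by simpa using h (Finset.mem_Ico.2 ⟨hij, hjL⟩)
  by_cases hdisj : i + L ≤ a ∨ a + L ≤ i
  · have hsub : Finset.Ico i (i + L) ⊆ S := fun j hj => by
      rw [Finset.mem_Ico] at hj
      exact (mem j hj.1 hj.2).resolve_left (by omega)
    have := Finset.card_le_card hsub
    rw [Nat.card_Ico] at this
    omega
  · rcases lt_trichotomy i a with hia | rfl | hai
    · exact absurd ((mem (a - 1) (by omega) (by omega)).resolve_left (by omega)) (hleft (by omega))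
    · rfl
    · exact absurd ((mem (a + L) (by omega) (by omega)).resolve_left (by omega)) hright

theorem existsUnique_hasRunAt_zeroesOn {S : Finset ℕ} {n a L : ℕ} (hS : S.card < L)
    (ha : a + L ≤ n) (hleft : 0 < a → a - 1 ∉ S) (hright : a + L ∉ S) :
    ∃! i, hasRunAt n (zeroesOn n (Finset.Ico a (a + L) ∪ S)) i L := by
  simp only [hasRunAt_zeroesOn_iff]
  exact ⟨a, ⟨ha, Finset.subset_union_left⟩,
    fun i hi => eq_of_Ico_subset_Ico_union hS hleft hright hi.2⟩

theorem not_hasRejCert_existsUnique_hasRunAt {n m L : ℕ} (hn : 2 * L + 1 ≤ n) (hm : m < L)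
    (A : (Fin n → Bool) → Prop) (hA : ∀ w, A w ↔ ∃! i, hasRunAt n w i L) :
    ¬ HasRejCert n m A := by
  intro hcert
  obtain ⟨S, hScard, hS⟩ :=
    hcert _ ((hA _).not.2 (not_existsUnique_hasRunAt_const_false (by omega)))
  have hcard : (S.image Fin.val).card < L := Finset.card_image_le.trans_lt (by omega)
  obtain ⟨a, haL, hleft, hright⟩ := exists_window_free_ends (S.image Fin.val) hcard.le
  refine hS _ (fun j hj => ?_)
    ((hA _).2 (existsUnique_hasRunAt_zeroesOn hcard (by omega) hleft hright))
  simp [zeroesOn, Finset.mem_image_of_mem Fin.val hj]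

theorem genexactly_lower_bound (k l n m : ℕ)
    (hkn : 2 * (Nat.clog 2 n) ^ ((k + 1) * (l + 1)) + 1 ≤ n)
    (hm : m < (Nat.clog 2 n) ^ ((k + 1) * (l + 1))) :
    ¬ ∃ A : (Fin n → Bool) → Prop, HasRejCert n m A ∧
        ∀ w : Fin n → Bool, (A w ↔ GenExactlyMem (k + 1) l n w) :=
  fun ⟨A, hcert, hA⟩ => not_hasRejCert_existsUnique_hasRunAt hkn hm A hA hcert
end

section
/- Let n, L, i be natural numbers with 1 ≤ L ≤ n and i < L, and let y : Fin n → Bool be the binary string 0^i 1 0^(L−i−1) 1^(n−L), i.e., y(j) = false if and only if (j < L and j ≠ i). Then y has no run of zeros of length L. -/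
lemma not_hasRunAt_of_eq_true {n : ℕ} {w : Fin n → Bool} {p L : ℕ} {j : Fin n}
    (hj : w j = true) (hpj : p ≤ j) (hjp : j < p + L) : ¬ hasRunAt n w p L :=
  fun h ↦ by simp [h.2 j hpj hjp] at hj

/- A window `[p, p + L)` either starts at or before `i`, and then contains the one at `i`,
or starts after `0`, and then its last position `p + L - 1 ≥ L` carries a one. -/
theorem no_run_after_flip_general (n L i : ℕ) (hi : i < L)
    (y : Fin n → Bool)
    (hy : ∀ j : Fin n, y j = false ↔ ((j : ℕ) < L ∧ (j : ℕ) ≠ i)) :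
    ¬ hasRun n y L := by
  rintro ⟨p, hp⟩
  have hpL : p + L ≤ n := hp.1
  have hy_true (j : Fin n) (hj : ¬ ((j : ℕ) < L ∧ (j : ℕ) ≠ i)) : y j = true := by
    rwa [← Bool.not_eq_false, hy]
  by_cases hpi : p ≤ i
  · exact not_hasRunAt_of_eq_true (j := ⟨i, by omega⟩) (hy_true _ (by simp)) hpi
      (by simp only; omega) hp
  · exact not_hasRunAt_of_eq_true (j := ⟨p + L - 1, by omega⟩) (hy_true _ (by simp only; omega))
      (by simp only; omega) (by simp only; omega) hp

theorem no_run_after_flip (n L i : ℕ) (hL : 1 ≤ L) (hLn : L ≤ n) (hi : i < L)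
    (y : Fin n → Bool)
    (hy : ∀ j : Fin n, y j = false ↔ ((j : ℕ) < L ∧ (j : ℕ) ≠ i)) :
    ¬ hasRun n y L :=
  no_run_after_flip_general n L i hi y hy
end

section
/- Let n, L, i be natural numbers with 1 ≤ L, 2L + 1 ≤ n, and i < L, and let y : Fin n → Bool be the binary string 0^i 1 0^(L−i−1) 1 0^L 1^(n−2L−1), i.e., y(j) = false if and only if ((j < L and j ≠ i) or (L + 1 ≤ j < 2L + 1)). Then the set of positions p such that y has a run of zeros of length L at position p is exactly {L + 1}; in particular y has a run of zeros of length L at exactly one position. -/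
theorem hasRunAt.lt_or_add_le_of_eq_true {n p L : ℕ} {w : Fin n → Bool} (h : hasRunAt n w p L)
    {j : ℕ} {hjn : j < n} (hj : w ⟨j, hjn⟩ = true) : j < p ∨ p + L ≤ j := by
  by_contra! hjp
  simp [h.2 ⟨j, hjn⟩ hjp.1 hjp.2] at hj

theorem one_run_position (n L i : ℕ) (hL : 1 ≤ L) (hn : 2 * L + 1 ≤ n) (hi : i < L)
    (y : Fin n → Bool)
    (hy : ∀ j : Fin n, y j = false ↔
        (((j : ℕ) < L ∧ (j : ℕ) ≠ i) ∨ (L + 1 ≤ (j : ℕ) ∧ (j : ℕ) < 2 * L + 1))) :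
    (∀ p : ℕ, hasRunAt n y p L ↔ p = L + 1) ∧
    ∃! p : ℕ, hasRunAt n y p L := by
  have one : ∀ j (hjn : j < n), (j = i ∨ j = L ∨ 2 * L + 1 ≤ j) → y ⟨j, hjn⟩ = true :=
    fun j hjn hj ↦ by rw [← Bool.not_eq_false, hy, Fin.val_mk]; omega
  have runs : ∀ p : ℕ, hasRunAt n y p L ↔ p = L + 1 := by
    refine fun p ↦ ⟨fun h ↦ ?_, ?_⟩
    · have hpn := h.1
      have past_i := h.lt_or_add_le_of_eq_true (one i (by omega) (by omega))
      have past_L := h.lt_or_add_le_of_eq_true (one L (by omega) (by omega))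
      by_contra hp
      have last_cell := h.lt_or_add_le_of_eq_true (one (p + L - 1) (by omega) (by omega))
      omega
    · rintro rfl
      exact ⟨by omega, fun j hj₁ hj₂ ↦ (hy j).2 (by omega)⟩
  exact ⟨runs, by simpa only [runs] using existsUnique_eq⟩
end

section
/- For all natural numbers k and c, there exists N such that for every n ≥ N: (a) the membership indicator of INIT_{k+1} on binary strings of length n is ⌈log n⌉^(k+1)-local, and (b) there is no (c · ⌈log n⌉^k)-local function f : (Fin n → Bool) → Bool such that f(w) = true ↔ w ∈ INIT_{k+1} for all w. (Query-complexity packaging of Theorem 1: DTIME[log^k n] ⊊ DTIME[log^(k+1) n], witnessed by INIT_{k+1}.) -/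
/-!
Deciding `INIT_{k+1}` only needs the `⌈log n⌉^(k+1)` prefix bits. Conversely, a procedure
reading fewer bits leaves some prefix bit unread on the all-zero string, which lies in
`INIT_{k+1}` once `⌈log n⌉^(k+1) ≤ n`; flipping that bit changes membership but not the
answer. Both size conditions hold for large `n` because `⌈log n⌉ → ∞` and polynomials in
`⌈log n⌉` are eventually below `2^(⌈log n⌉ - 1) < n`.
-/

open Filter Finset

lemma Nat.tendsto_clog_atTop {b : ℕ} (hb : 1 < b) : Tendsto (Nat.clog b) atTop atTop :=
  (Nat.clog_monotone b).tendsto_atTop_atTop fun y => ⟨b ^ y, (Nat.clog_pow b y hb).ge⟩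

lemma eventually_pow_mul_le_pow {b : ℕ} (hb : 1 < b) (m : ℕ) :
    ∀ᶠ t : ℕ in atTop, t ^ m * b ≤ b ^ t := by
  have hb' : (1 : ℝ) < b := by exact_mod_cast hb
  have hbpos : (0 : ℝ) < b := by positivity
  filter_upwards [(isLittleO_pow_const_const_pow_of_one_lt (R := ℝ) m hb').bound
    (inv_pos.mpr hbpos)] with t ht
  rw [Real.norm_of_nonneg (by positivity), Real.norm_of_nonneg (by positivity)] at ht
  have : (t : ℝ) ^ m * b ≤ (b : ℝ) ^ t := by
    rwa [← le_div_iff₀ hbpos, div_eq_inv_mul]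
  exact_mod_cast this

lemma eventually_clog_pow_le_self {b : ℕ} (hb : 1 < b) (m : ℕ) :
    ∀ᶠ n : ℕ in atTop, Nat.clog b n ^ m ≤ n := by
  filter_upwards [(Nat.tendsto_clog_atTop hb).eventually (eventually_pow_mul_le_pow hb m),
    (Nat.tendsto_clog_atTop hb).eventually_gt_atTop 0, eventually_gt_atTop 1] with n hpow hpos hn
  have hsplit : b ^ Nat.clog b n = b ^ (Nat.clog b n - 1) * b := by
    rw [← pow_succ, Nat.sub_add_cancel hpos]
  have hpred : b ^ (Nat.clog b n - 1) < n := Nat.pow_pred_clog_lt_self hb hn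
  have : Nat.clog b n ^ m ≤ b ^ (Nat.clog b n - 1) :=
    Nat.le_of_mul_le_mul_right (hsplit ▸ hpow) (by omega)
  omega

section InitMem

variable {k n : ℕ}

def initPrefix (k n : ℕ) : Finset (Fin n) := {i | (i : ℕ) < Nat.clog 2 n ^ k}

lemma mem_initPrefix {i : Fin n} : i ∈ initPrefix k n ↔ (i : ℕ) < Nat.clog 2 n ^ k := by
  simp [initPrefix]

lemma card_initPrefix : #(initPrefix k n) = min n (Nat.clog 2 n ^ k) :=
  Fin.card_filter_val_lt

lemma initMem_congr {v w : Fin n → Bool} (h : ∀ i ∈ initPrefix k n, v i = w i) :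
    InitMem k n v ↔ InitMem k n w := by
  refine and_congr_right fun _ => forall_congr' fun i => imp_congr_right fun hi => ?_
  rw [h i (mem_initPrefix.mpr hi)]

lemma initMem_false (h : Nat.clog 2 n ^ k ≤ n) : InitMem k n fun _ => false :=
  ⟨h, fun _ _ => rfl⟩

lemma not_initMem_update_true {i : Fin n} (hi : i ∈ initPrefix k n) (w : Fin n → Bool) :
    ¬ InitMem k n (Function.update w i true) := fun hw => by
  simpa using hw.2 i (mem_initPrefix.mp hi)

theorem not_exists_isLocal_initMem {m : ℕ} (hm : m < Nat.clog 2 n ^ k)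
    (hn : Nat.clog 2 n ^ k ≤ n) :
    ¬ ∃ f : (Fin n → Bool) → Bool, IsLocal n m f ∧ ∀ w, (f w = true ↔ InitMem k n w) := by
  rintro ⟨f, hloc, hf⟩
  obtain ⟨S, hS, hfS⟩ := hloc fun _ => false
  have hcard : #S < #(initPrefix k n) := by rw [card_initPrefix]; omega
  obtain ⟨i, hi, hiS⟩ := exists_mem_notMem_of_card_lt_card hcard
  have hagree : ∀ j ∈ S, Function.update (fun _ => false) i true j = false := fun j hj =>
    Function.update_of_ne (ne_of_mem_of_not_mem hj hiS) _ _
  apply not_initMem_update_true hi fun _ => false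
  rw [← hf, hfS _ hagree, hf]
  exact initMem_false hn

end InitMem

theorem init_hierarchy (k c : ℕ) :
    ∃ N : ℕ, ∀ n : ℕ, n ≥ N →
      (∀ w : Fin n → Bool, ∃ S : Finset (Fin n),
          S.card ≤ (Nat.clog 2 n) ^ (k + 1) ∧
          ∀ v : Fin n → Bool, (∀ i ∈ S, v i = w i) →
            (InitMem (k + 1) n v ↔ InitMem (k + 1) n w)) ∧
      ¬ ∃ f : (Fin n → Bool) → Bool, IsLocal n (c * (Nat.clog 2 n) ^ k) f ∧
          ∀ w : Fin n → Bool, (f w = true ↔ InitMem (k + 1) n w) := by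
  obtain ⟨N, hN⟩ := eventually_atTop.mp <|
    ((Nat.tendsto_clog_atTop one_lt_two).eventually_gt_atTop c).and
      (eventually_clog_pow_le_self one_lt_two (k + 1))
  refine ⟨N, fun n hn => ⟨fun w => ⟨initPrefix (k + 1) n, ?_, fun v => initMem_congr⟩, ?_⟩⟩
  · rw [card_initPrefix]
    exact min_le_right _ _
  obtain ⟨hc, hpow⟩ := hN n hn
  refine not_exists_isLocal_initMem ?_ hpow
  rw [pow_succ']
  exact Nat.mul_lt_mul_of_pos_right hc (pow_pos (by omega) k)
end
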